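/- Let 0<p≤1 and let μ be a finite positive Borel measure on [0,1) that is a (1/p)-Carleson measure. If H_{μ,α} : H^p → H^1 is bounded for some α>0, then for every 0<α'<α the operator H_{μ,α'} : H^p → H^1 is bounded. -/

import Mathlib

open MeasureTheory Filter Set
open scoped ENNReal

noncomputable section

/-- The `p`-th power mean of `|f|` over the circle of radius `r`. -/
def circleMean (p : ℝ) (f : ℂ → ℂ) (r : ℝ) : ℝ :=
  (1 / (2 * Real.pi)) *
    ∫ θ in (0:ℝ)..(2 * Real.pi), ‖f ((r : ℂ) * Complex.exp ((θ : ℂ) * Complex.I))‖ ^ p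

/-- The Hardy space `H^p` norm of `f`, valued in `ℝ≥0∞`. -/
def hardyNorm (p : ℝ) (f : ℂ → ℂ) : ℝ≥0∞ :=
  ⨆ r ∈ Set.Ioo (0:ℝ) 1, ENNReal.ofReal ((circleMean p f r) ^ (1 / p))

/-- `f` belongs to the Hardy space `H^p` of the unit disc. -/
def MemHp (p : ℝ) (f : ℂ → ℂ) : Prop :=
  DifferentiableOn ℂ f (Metric.ball (0:ℂ) 1) ∧ hardyNorm p f < ⊤

/-- The `k`-th Taylor coefficient of `f` at `0`. -/
def taylorCoeff (f : ℂ → ℂ) (k : ℕ) : ℂ :=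
  iteratedDeriv k f 0 / (Nat.factorial k : ℂ)

/-- The entries `μ_{n,k,α}` of the generalized Hankel matrix. -/
def hilbCoef (μ : Measure ℝ) (α : ℝ) (n k : ℕ) : ℝ :=
  ∫ t in Set.Ico (0:ℝ) 1,
    (Real.Gamma ((n : ℝ) + α) / (Real.Gamma ((n : ℝ) + 1) * Real.Gamma α)) * t ^ (n + k) ∂μ

/-- The generalized Hilbert operator `H_{μ,α}`. -/
def genHilbert (μ : Measure ℝ) (α : ℝ) (f : ℂ → ℂ) : ℂ → ℂ :=
  fun z => ∑' n : ℕ, (∑' k : ℕ, (hilbCoef μ α n k : ℂ) * taylorCoeff f k) * z ^ n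

/-- `μ` is an `s`-Carleson measure on `[0,1)`. -/
def IsCarleson (μ : Measure ℝ) (s : ℝ) : Prop :=
  ∃ C : ℝ, 0 < C ∧ ∀ t : ℝ, 0 ≤ t → t < 1 →
    (μ (Set.Ico t 1)).toReal ≤ C * (1 - t) ^ s

/-- `μ` is a vanishing `s`-Carleson measure on `[0,1)`. -/
def IsVanishingCarleson (μ : Measure ℝ) (s : ℝ) : Prop :=
  Tendsto (fun t : ℝ => (μ (Set.Ico t 1)).toReal / (1 - t) ^ s)
    (nhdsWithin 1 (Set.Iio (1:ℝ))) (nhds 0)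

/-- `μ` is a `β`-logarithmic `s`-Carleson measure on `[0,1)`. -/
def IsLogCarleson (μ : Measure ℝ) (β s : ℝ) : Prop :=
  ∃ C : ℝ, 0 < C ∧ ∀ t : ℝ, 0 ≤ t → t < 1 →
    (μ (Set.Ico t 1)).toReal * (Real.log (Real.exp 1 / (1 - t))) ^ β ≤ C * (1 - t) ^ s

/-- `μ` is a vanishing `β`-logarithmic `s`-Carleson measure on `[0,1)`. -/
def IsVanishingLogCarleson (μ : Measure ℝ) (β s : ℝ) : Prop :=
  Tendsto
    (fun t : ℝ =>
      (μ (Set.Ico t 1)).toReal * (Real.log (Real.exp 1 / (1 - t))) ^ β / (1 - t) ^ s)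
    (nhdsWithin 1 (Set.Iio (1:ℝ))) (nhds 0)

/-- `H_{μ,α}` is a bounded operator from `H^p` into `H^q`. -/
def BoundedOp (μ : Measure ℝ) (α p q : ℝ) : Prop :=
  ∃ C : ℝ, 0 < C ∧ ∀ f : ℂ → ℂ, MemHp p f →
    MemHp q (genHilbert μ α f) ∧
    hardyNorm q (genHilbert μ α f) ≤ ENNReal.ofReal C * hardyNorm p f

/-- `T` maps bounded sequences of `H^p` to sequences with subsequences converging
in the `H^q` norm to an element of `H^q`, i.e. `T` is a compact operator from
`H^p` into `H^q`. -/
def CompactMap (p q : ℝ) (T : (ℂ → ℂ) → ℂ → ℂ) : Prop :=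
  ∀ F : ℕ → ℂ → ℂ, (∀ n, MemHp p (F n)) →
    (∃ M : ℝ, ∀ n, hardyNorm p (F n) ≤ ENNReal.ofReal M) →
    ∃ (g : ℂ → ℂ) (φ : ℕ → ℕ), StrictMono φ ∧ MemHp q g ∧
      Tendsto (fun n => hardyNorm q (fun z => T (F (φ n)) z - g z)) atTop (nhds 0)

/-- `H_{μ,α}` is a compact operator from `H^p` into `H^q`. -/
def CompactOp (μ : Measure ℝ) (α p q : ℝ) : Prop :=
  CompactMap p q (genHilbert μ α)

/-- `T` is linear on `H^p`. -/
def LinearOn (p : ℝ) (T : (ℂ → ℂ) → ℂ → ℂ) : Prop :=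
  (∀ f g : ℂ → ℂ, MemHp p f → MemHp p g →
      ∀ z, T (fun w => f w + g w) z = T f z + T g z) ∧
  (∀ (c : ℂ) (f : ℂ → ℂ), MemHp p f → ∀ z, T (fun w => c * f w) z = c * T f z)

/-- The `H^p → H^q` operator norm of the difference `T - K`. -/
def opDist (p q : ℝ) (T K : (ℂ → ℂ) → ℂ → ℂ) : ℝ≥0∞ :=
  ⨆ f ∈ {f : ℂ → ℂ | MemHp p f ∧ hardyNorm p f ≤ 1},
    hardyNorm q (fun z => T f z - K f z)

/-- The essential norm of `H_{μ,α} : H^p → H^q`: the distance to the compact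
linear operators. -/
def essNorm (μ : Measure ℝ) (α p q : ℝ) : ℝ≥0∞ :=
  ⨅ K ∈ {K : (ℂ → ℂ) → ℂ → ℂ | LinearOn p K ∧ CompactMap p q K},
    opDist p q (genHilbert μ α) K

/-- `limsup_{t→1⁻} μ([t,1))/(1-t)^s`. -/
def carlesonLimsup (μ : Measure ℝ) (s : ℝ) : ℝ :=
  Filter.limsup (fun t : ℝ => (μ (Set.Ico t 1)).toReal / (1 - t) ^ s)
    (nhdsWithin 1 (Set.Iio (1:ℝ)))

/-- The fractional derivative operator `R^{-1,α-1}`. -/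
def fracDeriv (α : ℝ) (g : ℂ → ℂ) (w : ℂ) : ℂ :=
  ∑' n : ℕ,
    ((Real.Gamma ((n : ℝ) + α) / (Real.Gamma ((n : ℝ) + 1) * Real.Gamma α) : ℝ) : ℂ) *
      taylorCoeff g n * w ^ n

end

/-!
The `n`-th rows of the matrices of `H_{μ,α'}` and `H_{μ,α}` differ by the factor
`c n = Γ(n + α') Γ(α) / (Γ(n + α) Γ(α'))`, which by the Beta integral is the `n`-th moment
`∫₀¹ tⁿ dν(t)` of the Beta(α', α - α') distribution `ν`. Hence `H_{μ,α'} f` is obtained from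
`g = H_{μ,α} f` by multiplying its Taylor coefficients by these moments, i.e.
`H_{μ,α'} f z = ∫₀¹ g (t z) dν(t)` is an average of dilations of `g`. Dilations do not increase
the `H¹` norm, so neither does their average, and `‖H_{μ,α'} f‖_{H¹} ≤ ‖H_{μ,α} f‖_{H¹}`.
-/

open FormalMultilinearSeries ProbabilityTheory
open scoped Topology NNReal

section HardyOne

lemma circleMean_one (f : ℂ → ℂ) (r : ℝ) :
    circleMean 1 f r = (2 * Real.pi)⁻¹ * ∫ θ in 0..2 * Real.pi, ‖f (circleMap 0 r θ)‖ := by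
  simp [circleMean, circleMap_zero]

lemma hardyNorm_one (f : ℂ → ℂ) :
    hardyNorm 1 f = ⨆ r ∈ Ioo (0 : ℝ) 1, ENNReal.ofReal (circleMean 1 f r) := by
  simp [hardyNorm]

lemma circleMean_one_le_toReal_hardyNorm {f : ℂ → ℂ} (hf : hardyNorm 1 f ≠ ⊤) {r : ℝ}
    (hr : r ∈ Ioo (0 : ℝ) 1) : circleMean 1 f r ≤ (hardyNorm 1 f).toReal :=
  (ENNReal.ofReal_le_iff_le_toReal hf).1 <|
    hardyNorm_one f ▸ le_biSup (fun r ↦ ENNReal.ofReal (circleMean 1 f r)) hr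

lemma hardyNorm_one_le_ofReal {f : ℂ → ℂ} {M : ℝ}
    (h : ∀ r ∈ Ioo (0 : ℝ) 1, circleMean 1 f r ≤ M) : hardyNorm 1 f ≤ ENNReal.ofReal M := by
  rw [hardyNorm_one]
  exact iSup₂_le fun r hr ↦ ENNReal.ofReal_le_ofReal (h r hr)

lemma hardyNorm_one_zero : hardyNorm 1 (0 : ℂ → ℂ) = 0 :=
  nonpos_iff_eq_zero.1 <| (hardyNorm_one_le_ofReal fun r _ ↦ by simp [circleMean_one]).trans
    ENNReal.ofReal_zero.le

lemma memHp_one_zero : MemHp 1 (0 : ℂ → ℂ) :=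
  ⟨differentiableOn_const 0, by simp [hardyNorm_one_zero]⟩

end HardyOne

section PowerSeries

variable {b : ℕ → ℂ}

lemma ofScalarsSum_eq_zero_of_radius_lt {z : ℂ} (h : (ofScalars ℂ b).radius < ‖z‖₊) :
    ofScalarsSum b z = 0 := by
  rw [ofScalars_sum_eq]
  refine tsum_eq_zero_of_not_summable fun hs ↦ h.not_ge <| le_radius_of_tendsto _ (l := 0) ?_
  simpa [norm_smul] using hs.tendsto_atTop_zero.norm

lemma ofScalarsSum_eq_zero_of_ne_zero_of_radius_eq_zero (h : (ofScalars ℂ b).radius = 0)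
    {z : ℂ} (hz : z ≠ 0) : ofScalarsSum b z = 0 :=
  ofScalarsSum_eq_zero_of_radius_lt (by simpa [h] using hz)

lemma coeff_zero_eq_zero_of_radius_eq_zero (h : (ofScalars ℂ b).radius = 0)
    (hc : ContinuousAt (ofScalarsSum (E := ℂ) b) 0) : b 0 = 0 := by
  have hlim : Tendsto (ofScalarsSum (E := ℂ) b) (𝓝[≠] 0) (𝓝 0) :=
    tendsto_const_nhds.congr' <| eventually_nhdsWithin_of_forall fun z hz ↦
      (ofScalarsSum_eq_zero_of_ne_zero_of_radius_eq_zero h hz).symm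
  simpa using tendsto_nhds_unique (hc.tendsto.mono_left nhdsWithin_le_nhds) hlim

lemma ofScalarsSum_eq_zero_of_radius_eq_zero (h : (ofScalars ℂ b).radius = 0) (h0 : b 0 = 0) :
    ofScalarsSum (E := ℂ) b = 0 := by
  ext z
  rcases eq_or_ne z 0 with rfl | hz
  · simp [h0]
  · exact ofScalarsSum_eq_zero_of_ne_zero_of_radius_eq_zero h hz

lemma one_le_radius_of_differentiableOn
    (hg : DifferentiableOn ℂ (ofScalarsSum (E := ℂ) b) (Metric.ball 0 1))
    (h0 : 0 < (ofScalars ℂ b).radius) : 1 ≤ (ofScalars ℂ b).radius := by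
  by_contra! hlt
  obtain ⟨r, hr, hr1⟩ := ENNReal.lt_iff_exists_nnreal_btwn.1 hlt
  have hr1 : (r : ℝ) < 1 := by exact_mod_cast hr1
  set z₀ : ℂ := (((r + 1) / 2 : ℝ) : ℂ)
  have hz₀ : ‖z₀‖ = (r + 1) / 2 := by rw [Complex.norm_real, Real.norm_of_nonneg (by positivity)]
  -- `ofScalarsSum` is the junk value `0` outside the disc of convergence, so it vanishes near
  -- `z₀`, hence on the unit disc by the identity theorem, hence the series itself is `0`.
  have hnear : ofScalarsSum (E := ℂ) b =ᶠ[𝓝 z₀] 0 := by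
    filter_upwards [(isOpen_lt continuous_const continuous_norm).mem_nhds
      (show (r : ℝ) < ‖z₀‖ by rw [hz₀]; linarith)] with z hz
    exact ofScalarsSum_eq_zero_of_radius_lt (hr.trans (by exact_mod_cast hz))
  have hzero := (hg.analyticOnNhd Metric.isOpen_ball).eqOn_zero_of_preconnected_of_eventuallyEq_zero
    (convex_ball 0 1).isPreconnected (by simp [hz₀]; linarith) hnear
  have hseries : ofScalars ℂ b = 0 :=
    ((ofScalars ℂ b).hasFPowerSeriesOnBall h0).hasFPowerSeriesAt.congr
      (Filter.eventuallyEq_of_mem (Metric.ball_mem_nhds 0 one_pos) hzero) |>.eq_zero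
  simp [hseries] at hlt

variable {m : ℕ → ℂ}

lemma radius_le_radius_ofScalars_mul (hm : ∀ n, ‖m n‖ ≤ 1) :
    (ofScalars ℂ b).radius ≤ (ofScalars ℂ fun n ↦ m n * b n).radius :=
  radius_le_of_le fun n ↦ by
    simpa [norm_mul] using mul_le_of_le_one_left (norm_nonneg _) (hm n)

lemma radius_ofScalars_mul_eq_zero {δ ρ : ℝ} (hδ : 0 < δ) (hρ : 0 < ρ)
    (hm : ∀ n, δ * ρ ^ n ≤ ‖m n‖) (h : (ofScalars ℂ b).radius = 0) :
    (ofScalars ℂ fun n ↦ m n * b n).radius = 0 := by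
  by_contra! hpos
  obtain ⟨r, hr0, hr⟩ := ENNReal.lt_iff_exists_nnreal_btwn.1 (pos_iff_ne_zero.2 hpos)
  obtain ⟨C, -, hC⟩ := norm_mul_pow_le_of_lt_radius _ hr
  set s : ℝ≥0 := ρ.toNNReal * r
  have hs : (s : ℝ) = ρ * r := by simp [s, hρ.le]
  have hs0 : (0 : ℝ≥0∞) < s :=
    ENNReal.coe_pos.2 <| mul_pos (Real.toNNReal_pos.2 hρ) (ENNReal.coe_pos.1 hr0)
  have hle : (s : ℝ≥0∞) ≤ (ofScalars ℂ b).radius := by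
    refine le_radius_of_bound _ (C / δ) fun n ↦ ?_
    rw [le_div_iff₀ hδ, hs]
    calc ‖ofScalars ℂ b n‖ * (ρ * r) ^ n * δ = δ * ρ ^ n * (‖b n‖ * (r : ℝ) ^ n) := by
          rw [ofScalars_norm]; ring
      _ ≤ ‖m n‖ * (‖b n‖ * (r : ℝ) ^ n) := by gcongr; exact hm n
      _ ≤ C := by simpa [norm_mul, mul_assoc] using hC n
  exact hs0.not_ge (h ▸ hle)

end PowerSeries

noncomputable def unitMoment (w : ℝ → ℝ) (n : ℕ) : ℝ := ∫ t in Ioo (0 : ℝ) 1, t ^ n * w t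

section Moments

variable {w : ℝ → ℝ}

lemma integrableOn_pow_mul (hw : IntegrableOn w (Ioo 0 1)) (n : ℕ) :
    IntegrableOn (fun t ↦ t ^ n * w t) (Ioo 0 1) :=
  hw.bdd_mul (c := 1) (continuous_pow n).aestronglyMeasurable <|
    (ae_restrict_iff' measurableSet_Ioo).2 <| ae_of_all _ fun t ht ↦ by
      rw [norm_pow, Real.norm_of_nonneg ht.1.le]
      exact pow_le_one₀ ht.1.le ht.2.le

lemma unitMoment_nonneg (hw : ∀ t ∈ Ioo (0 : ℝ) 1, 0 ≤ w t) (n : ℕ) : 0 ≤ unitMoment w n :=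
  setIntegral_nonneg measurableSet_Ioo fun t ht ↦ mul_nonneg (pow_nonneg ht.1.le n) (hw t ht)

lemma unitMoment_le_integral (hw : ∀ t ∈ Ioo (0 : ℝ) 1, 0 ≤ w t)
    (hwint : IntegrableOn w (Ioo 0 1)) (n : ℕ) :
    unitMoment w n ≤ ∫ t in Ioo (0 : ℝ) 1, w t :=
  setIntegral_mono_on (integrableOn_pow_mul hwint n) hwint measurableSet_Ioo fun t ht ↦ by
    simpa using mul_le_mul_of_nonneg_right (pow_le_one₀ ht.1.le ht.2.le) (hw t ht)

lemma exists_pow_mul_le_unitMoment (hw : ∀ t ∈ Ioo (0 : ℝ) 1, 0 < w t)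
    (hwint : IntegrableOn w (Ioo 0 1)) : ∃ δ > 0, ∀ n, δ * (1 / 2) ^ n ≤ unitMoment w n := by
  have hsub : Ioo (1 / 2 : ℝ) 1 ⊆ Ioo 0 1 := Ioo_subset_Ioo_left (by norm_num)
  have hw0 : ∀ t ∈ Ioo (0 : ℝ) 1, 0 ≤ w t := fun t ht ↦ (hw t ht).le
  refine ⟨∫ t in Ioo (1 / 2 : ℝ) 1, w t, ?_, fun n ↦ ?_⟩
  · show 0 < _
    rw [setIntegral_pos_iff_support_of_nonneg_ae
      ((ae_restrict_iff' measurableSet_Ioo).2 (ae_of_all _ fun t ht ↦ hw0 t (hsub ht)))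
      (hwint.mono_set hsub),
      inter_eq_self_of_subset_right (s := Function.support w) fun t ht ↦ (hw t (hsub ht)).ne',
      Real.volume_Ioo]
    norm_num
  calc (∫ t in Ioo (1 / 2 : ℝ) 1, w t) * (1 / 2) ^ n
      = ∫ t in Ioo (1 / 2 : ℝ) 1, (1 / 2) ^ n * w t := by rw [integral_const_mul, mul_comm]
    _ ≤ ∫ t in Ioo (1 / 2 : ℝ) 1, t ^ n * w t :=
        setIntegral_mono_on ((hwint.mono_set hsub).const_mul _)
          ((integrableOn_pow_mul hwint n).mono_set hsub) measurableSet_Ioo fun t ht ↦ by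
            gcongr
            · exact hw0 t (hsub ht)
            · exact ht.1.le
    _ ≤ unitMoment w n :=
        setIntegral_mono_set (integrableOn_pow_mul hwint n)
          ((ae_restrict_iff' measurableSet_Ioo).2 <| ae_of_all _ fun t ht ↦
            mul_nonneg (pow_nonneg ht.1.le n) (hw0 t ht))
          hsub.eventuallyLE

end Moments

section Beta

variable {a b : ℝ}

lemma betaPDFReal_nonneg (ha : 0 < a) (hb : 0 < b) (t : ℝ) : 0 ≤ betaPDFReal a b t := by
  by_cases ht : 0 < t ∧ t < 1
  · exact (betaPDFReal_pos ht.1 ht.2 ha hb).le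
  · simp [betaPDFReal, ht]

lemma integrable_betaPDFReal (ha : 0 < a) (hb : 0 < b) : Integrable (betaPDFReal a b) := by
  refine ⟨(stronglyMeasurable_betaPDFReal a b).aestronglyMeasurable, ?_⟩
  rw [hasFiniteIntegral_iff_ofReal (ae_of_all _ (betaPDFReal_nonneg ha hb))]
  exact (lintegral_betaPDF_eq_one ha hb).trans_lt ENNReal.one_lt_top

lemma setIntegral_Ioo_betaPDFReal (ha : 0 < a) (hb : 0 < b) :
    ∫ t in Ioo (0 : ℝ) 1, betaPDFReal a b t = 1 := by
  rw [setIntegral_eq_integral_of_forall_compl_eq_zero (s := Ioo 0 1) (f := betaPDFReal a b)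
      fun t ht ↦ if_neg ht,
    integral_eq_lintegral_of_nonneg_ae (ae_of_all _ (betaPDFReal_nonneg ha hb))
      (stronglyMeasurable_betaPDFReal a b).aestronglyMeasurable]
  exact ENNReal.toReal_eq_one_iff _ |>.2 (lintegral_betaPDF_eq_one ha hb)

lemma unitMoment_betaPDFReal (ha : 0 < a) (hb : 0 < b) (n : ℕ) :
    unitMoment (betaPDFReal a b) n = beta (n + a) b / beta a b := by
  have hna : 0 < n + a := by positivity
  have hB := (beta_pos ha hb).ne'
  have hnB := (beta_pos hna hb).ne'
  calc unitMoment (betaPDFReal a b) n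
      = ∫ t in Ioo (0 : ℝ) 1, beta (n + a) b / beta a b * betaPDFReal (n + a) b t := by
        refine setIntegral_congr_fun measurableSet_Ioo fun t ht ↦ ?_
        simp only [betaPDFReal, if_pos (show 0 < t ∧ t < 1 from ht)]
        rw [add_sub_assoc, Real.rpow_add ht.1, Real.rpow_natCast]
        field_simp
    _ = beta (n + a) b / beta a b := by
        rw [integral_const_mul, setIntegral_Ioo_betaPDFReal hna hb, mul_one]

end Beta

section Dilation

variable {w : ℝ → ℝ}

lemma ofReal_mul_circleMap_zero (t r θ : ℝ) :
    (t : ℂ) * circleMap 0 r θ = circleMap 0 (t * r) θ := by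
  simp only [circleMap_zero, Complex.ofReal_mul]
  ring

lemma integrable_norm_comp_mul_circleMap_mul {g : ℂ → ℂ}
    (hg : ContinuousOn g (Metric.ball 0 1)) (hw : ∀ t ∈ Ioo (0 : ℝ) 1, 0 ≤ w t)
    (hwint : IntegrableOn w (Ioo 0 1)) {r : ℝ} (hr : r ∈ Ioo (0 : ℝ) 1) :
    Integrable (fun x : ℝ × ℝ ↦ ‖g (x.2 * circleMap 0 r x.1)‖ * w x.2)
      ((volume.restrict (Ioc 0 (2 * Real.pi))).prod (volume.restrict (Ioo 0 1))) := by
  have hmaps : ∀ x ∈ Ioc 0 (2 * Real.pi) ×ˢ Ioo (0 : ℝ) 1,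
      (x.2 : ℂ) * circleMap 0 r x.1 ∈ Metric.closedBall 0 r := fun x hx ↦ by
    rw [ofReal_mul_circleMap_zero, mem_closedBall_zero_iff, norm_circleMap_zero,
      abs_of_pos (mul_pos hx.2.1 hr.1)]
    exact mul_le_of_le_one_left hr.1.le hx.2.2.le
  obtain ⟨C, hC⟩ := (isCompact_closedBall (0 : ℂ) r).exists_bound_of_continuousOn
    (hg.mono (Metric.closedBall_subset_ball hr.2))
  have hdom : Integrable (fun x : ℝ × ℝ ↦ C * w x.2)
      ((volume.restrict (Ioc 0 (2 * Real.pi))).prod (volume.restrict (Ioo 0 1))) := by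
    simpa using (integrable_const (1 : ℝ)).mul_prod (hwint.const_mul C)
  have hgmeas : AEStronglyMeasurable (fun x : ℝ × ℝ ↦ ‖g (x.2 * circleMap 0 r x.1)‖)
      ((volume.restrict (Ioc 0 (2 * Real.pi))).prod (volume.restrict (Ioo 0 1))) := by
    rw [Measure.prod_restrict]
    refine ContinuousOn.aestronglyMeasurable ?_ (measurableSet_Ioc.prod measurableSet_Ioo)
    refine (hg.comp (by fun_prop) fun x hx ↦ ?_).norm
    exact Metric.closedBall_subset_ball hr.2 (hmaps x hx)
  have hwmeas := hwint.aestronglyMeasurable.aemeasurable.comp_snd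
    (μ := volume.restrict (Ioc 0 (2 * Real.pi)))
  refine hdom.mono' (hgmeas.mul hwmeas.aestronglyMeasurable) ?_
  rw [Measure.prod_restrict, ae_restrict_iff' (measurableSet_Ioc.prod measurableSet_Ioo)]
  refine ae_of_all _ fun x hx ↦ ?_
  rw [norm_mul, norm_norm, Real.norm_of_nonneg (hw x.2 hx.2)]
  exact mul_le_mul_of_nonneg_right (hC _ (hmaps x hx)) (hw x.2 hx.2)

lemma circleMean_one_le_of_eq_integral {g G : ℂ → ℂ}
    (hg : ContinuousOn g (Metric.ball 0 1)) (hw : ∀ t ∈ Ioo (0 : ℝ) 1, 0 ≤ w t)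
    (hwint : IntegrableOn w (Ioo 0 1)) {r : ℝ} (hr : r ∈ Ioo (0 : ℝ) 1)
    (hG : Continuous fun θ ↦ G (circleMap 0 r θ))
    (hrep : ∀ θ, G (circleMap 0 r θ) = ∫ t in Ioo (0 : ℝ) 1, g (t * circleMap 0 r θ) * w t)
    {M : ℝ} (hM : ∀ s ∈ Ioo (0 : ℝ) 1, circleMean 1 g s ≤ M) :
    circleMean 1 G r ≤ M * ∫ t in Ioo (0 : ℝ) 1, w t := by
  have h2π : 0 < 2 * Real.pi := by positivity
  have hΦ := integrable_norm_comp_mul_circleMap_mul hg hw hwint hr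
  have hpt : ∀ θ, ‖G (circleMap 0 r θ)‖ ≤
      ∫ t in Ioo (0 : ℝ) 1, ‖g (t * circleMap 0 r θ)‖ * w t := fun θ ↦ by
    rw [hrep]
    refine (norm_integral_le_integral_norm _).trans_eq <|
      setIntegral_congr_fun measurableSet_Ioo fun t ht ↦ ?_
    rw [norm_mul, Complex.norm_real, Real.norm_of_nonneg (hw t ht)]
  have hinner : ∀ t ∈ Ioo (0 : ℝ) 1,
      ∫ θ in Ioc 0 (2 * Real.pi), ‖g (t * circleMap 0 r θ)‖ * w t ≤ 2 * Real.pi * M * w t := by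
    intro t ht
    have hmean := hM (t * r) ⟨mul_pos ht.1 hr.1, by nlinarith [ht.2, hr.2, hr.1]⟩
    rw [circleMean_one, inv_mul_le_iff₀ h2π] at hmean
    rw [integral_mul_const]
    refine mul_le_mul_of_nonneg_right ?_ (hw t ht)
    simpa only [ofReal_mul_circleMap_zero, intervalIntegral.integral_of_le h2π.le] using hmean
  rw [circleMean_one]
  calc (2 * Real.pi)⁻¹ * ∫ θ in 0..2 * Real.pi, ‖G (circleMap 0 r θ)‖
      ≤ (2 * Real.pi)⁻¹ * ∫ θ in Ioc 0 (2 * Real.pi),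
          ∫ t in Ioo (0 : ℝ) 1, ‖g (t * circleMap 0 r θ)‖ * w t := by
        rw [intervalIntegral.integral_of_le h2π.le]
        refine mul_le_mul_of_nonneg_left ?_ (by positivity)
        exact setIntegral_mono_on hG.norm.integrableOn_Ioc hΦ.integral_prod_left
          measurableSet_Ioc fun θ _ ↦ hpt θ
    _ = (2 * Real.pi)⁻¹ * ∫ t in Ioo (0 : ℝ) 1,
          ∫ θ in Ioc 0 (2 * Real.pi), ‖g (t * circleMap 0 r θ)‖ * w t := by
        rw [integral_integral_swap hΦ]
    _ ≤ (2 * Real.pi)⁻¹ * ∫ t in Ioo (0 : ℝ) 1, 2 * Real.pi * M * w t := by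
        refine mul_le_mul_of_nonneg_left ?_ (by positivity)
        exact setIntegral_mono_on hΦ.integral_prod_right (hwint.const_mul _) measurableSet_Ioo
          hinner
    _ = M * ∫ t in Ioo (0 : ℝ) 1, w t := by
        rw [integral_const_mul]
        field_simp

end Dilation

section Multiplier

variable {w : ℝ → ℝ} {b : ℕ → ℂ}

lemma summable_norm_mul_pow_of_one_le_radius (hb : 1 ≤ (ofScalars ℂ b).radius)
    {z : ℂ} (hz : ‖z‖ < 1) : Summable fun n ↦ ‖b n‖ * ‖z‖ ^ n := by
  simpa using (ofScalars ℂ b).summable_norm_mul_pow (r := ‖z‖₊)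
    ((show (‖z‖₊ : ℝ≥0∞) < 1 by exact_mod_cast hz).trans_le hb)

lemma ofScalarsSum_unitMoment_mul_eq_integral (hw : ∀ t ∈ Ioo (0 : ℝ) 1, 0 ≤ w t)
    (hwint : IntegrableOn w (Ioo 0 1)) (hb : 1 ≤ (ofScalars ℂ b).radius) {z : ℂ} (hz : ‖z‖ < 1) :
    ofScalarsSum (fun n ↦ (unitMoment w n : ℂ) * b n) z =
      ∫ t in Ioo (0 : ℝ) 1, ofScalarsSum b ((t : ℂ) * z) * w t := by
  set F : ℕ → ℝ → ℂ := fun n t ↦ b n * z ^ n * ((t ^ n * w t : ℝ) : ℂ)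
  have hF_int : ∀ n, IntegrableOn (F n) (Ioo 0 1) := fun n ↦
    (integrableOn_pow_mul hwint n).ofReal.const_mul _
  have hF_norm : ∀ n, ∫ t in Ioo (0 : ℝ) 1, ‖F n t‖ = ‖b n‖ * ‖z‖ ^ n * unitMoment w n := by
    intro n
    rw [unitMoment, ← integral_const_mul]
    refine setIntegral_congr_fun measurableSet_Ioo fun t ht ↦ ?_
    simp [F, abs_of_nonneg ht.1.le, abs_of_nonneg (hw t ht)]
  have hF_sum : Summable fun n ↦ ∫ t in Ioo (0 : ℝ) 1, ‖F n t‖ := by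
    simp_rw [hF_norm]
    refine .of_nonneg_of_le (fun n ↦ by positivity [unitMoment_nonneg hw n]) (fun n ↦ ?_)
      ((summable_norm_mul_pow_of_one_le_radius hb hz).mul_right (∫ t in Ioo (0 : ℝ) 1, w t))
    exact mul_le_mul_of_nonneg_left (unitMoment_le_integral hw hwint n) (by positivity)
  calc ofScalarsSum (fun n ↦ (unitMoment w n : ℂ) * b n) z
      = ∑' n, ∫ t in Ioo (0 : ℝ) 1, F n t := by
        rw [ofScalars_sum_eq]
        refine tsum_congr fun n ↦ ?_
        rw [integral_const_mul, integral_complex_ofReal, unitMoment, smul_eq_mul]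
        ring
    _ = ∫ t in Ioo (0 : ℝ) 1, ∑' n, F n t := integral_tsum_of_summable_integral_norm hF_int hF_sum
    _ = ∫ t in Ioo (0 : ℝ) 1, ofScalarsSum b ((t : ℂ) * z) * w t := by
        refine integral_congr_ae (ae_of_all _ fun t ↦ ?_)
        dsimp only
        rw [ofScalars_sum_eq, ← tsum_mul_right]
        refine tsum_congr fun n ↦ ?_
        simp only [F, smul_eq_mul]
        push_cast
        ring

lemma differentiableOn_ofScalarsSum_of_one_le_radius (hb : 1 ≤ (ofScalars ℂ b).radius) :
    DifferentiableOn ℂ (ofScalarsSum (E := ℂ) b) (Metric.ball 0 1) :=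
  ((ofScalars ℂ b).hasFPowerSeriesOnBall (zero_lt_one.trans_le hb)).differentiableOn.mono <|
    (Metric.eball_coe (x := (0 : ℂ)) (ε := 1)).symm.subset.trans <| by
      simpa using Metric.eball_subset_eball hb

theorem memHp_one_ofScalarsSum_unitMoment_mul (hw : ∀ t ∈ Ioo (0 : ℝ) 1, 0 < w t)
    (hwint : IntegrableOn w (Ioo 0 1)) (hmass : ∫ t in Ioo (0 : ℝ) 1, w t ≤ 1)
    (hb : MemHp 1 (ofScalarsSum b)) :
    MemHp 1 (ofScalarsSum fun n ↦ (unitMoment w n : ℂ) * b n) ∧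
      hardyNorm 1 (ofScalarsSum fun n ↦ (unitMoment w n : ℂ) * b n) ≤
        hardyNorm 1 (ofScalarsSum b) := by
  obtain ⟨hdiff, hfin⟩ := hb
  have hw0 : ∀ t ∈ Ioo (0 : ℝ) 1, 0 ≤ w t := fun t ht ↦ (hw t ht).le
  have hnorm : ∀ n, ‖(unitMoment w n : ℂ)‖ = unitMoment w n := fun n ↦ by
    rw [Complex.norm_real, Real.norm_of_nonneg (unitMoment_nonneg hw0 n)]
  rcases eq_zero_or_pos (ofScalars ℂ b).radius with h0 | hpos
  -- Radius `0`: both sums are junk `0` off the origin, since the moments decay only geometrically.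
  · obtain ⟨δ, hδ, hδm⟩ := exists_pow_mul_le_unitMoment hw hwint
    have hb0 := coeff_zero_eq_zero_of_radius_eq_zero h0
      (hdiff.continuousOn.continuousAt (Metric.ball_mem_nhds 0 one_pos))
    rw [ofScalarsSum_eq_zero_of_radius_eq_zero (radius_ofScalars_mul_eq_zero hδ one_half_pos
      (fun n ↦ by rw [hnorm]; exact hδm n) h0) (by simp [hb0]), hardyNorm_one_zero]
    exact ⟨memHp_one_zero, zero_le⟩
  have h1 := one_le_radius_of_differentiableOn hdiff hpos
  have hGdiff := differentiableOn_ofScalarsSum_of_one_le_radius <| h1.trans <|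
    radius_le_radius_ofScalars_mul (m := fun n ↦ (unitMoment w n : ℂ)) fun n ↦
      (hnorm n).trans_le <| (unitMoment_le_integral hw0 hwint n).trans hmass
  have hle : hardyNorm 1 (ofScalarsSum fun n ↦ (unitMoment w n : ℂ) * b n) ≤
      hardyNorm 1 (ofScalarsSum b) := by
    refine (hardyNorm_one_le_ofReal fun r hr ↦ ?_).trans (ENNReal.ofReal_toReal hfin.ne).le
    have hsphere : ∀ θ, ‖circleMap 0 r θ‖ < 1 := fun θ ↦ by
      rw [norm_circleMap_zero, abs_of_pos hr.1]
      exact hr.2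
    refine (circleMean_one_le_of_eq_integral hdiff.continuousOn hw0 hwint hr
      (hGdiff.continuousOn.comp_continuous (continuous_circleMap 0 r) fun θ ↦ by
        simpa using hsphere θ)
      (fun θ ↦ ofScalarsSum_unitMoment_mul_eq_integral hw0 hwint h1 (hsphere θ))
      (fun s hs ↦ circleMean_one_le_toReal_hardyNorm hfin.ne hs)).trans ?_
    exact mul_le_of_le_one_right ENNReal.toReal_nonneg hmass
  exact ⟨⟨hGdiff, hle.trans_lt hfin⟩, hle⟩

end Multiplier

section GenHilbert

variable (μ : Measure ℝ) {α α' : ℝ}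

lemma genHilbert_eq_ofScalarsSum (f : ℂ → ℂ) :
    genHilbert μ α f =
      ofScalarsSum fun n ↦ ∑' k, (hilbCoef μ α n k : ℂ) * taylorCoeff f k := by
  ext z
  rw [ofScalars_sum_eq]
  rfl

lemma hilbCoef_eq_unitMoment_mul (hα' : 0 < α') (hlt : α' < α) (n k : ℕ) :
    hilbCoef μ α' n k = unitMoment (betaPDFReal α' (α - α')) n * hilbCoef μ α n k := by
  have hβ : 0 < α - α' := sub_pos.2 hlt
  have hα : 0 < α := hα'.trans hlt
  have hΓ : ∀ {x : ℝ}, 0 < x → Real.Gamma x ≠ 0 := fun hx ↦ (Real.Gamma_pos_of_pos hx).ne'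
  have hΓnα' := hΓ (show (0 : ℝ) < n + α' by positivity)
  have hΓnα := hΓ (show (0 : ℝ) < n + α by positivity)
  have hΓn := hΓ (show (0 : ℝ) < n + 1 by positivity)
  have hΓα' := hΓ hα'
  have hΓα := hΓ hα
  have hΓβ := hΓ hβ
  rw [hilbCoef, hilbCoef, integral_const_mul, integral_const_mul, unitMoment_betaPDFReal hα' hβ,
    ← mul_assoc, beta, beta, show (n : ℝ) + α' + (α - α') = n + α by ring,
    show α' + (α - α') = α by ring]
  congr 1
  field_simp

lemma genHilbert_eq_ofScalarsSum_unitMoment_mul (hα' : 0 < α') (hlt : α' < α) (f : ℂ → ℂ) :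
    genHilbert μ α' f = ofScalarsSum fun n ↦ (unitMoment (betaPDFReal α' (α - α')) n : ℂ) *
      ∑' k, (hilbCoef μ α n k : ℂ) * taylorCoeff f k := by
  rw [genHilbert_eq_ofScalarsSum]
  congr 1
  ext n
  rw [← tsum_mul_left]
  congr 1
  ext k
  rw [hilbCoef_eq_unitMoment_mul μ hα' hlt]
  push_cast
  ring

theorem memHp_one_genHilbert_of_lt (hα' : 0 < α') (hlt : α' < α) {f : ℂ → ℂ}
    (hf : MemHp 1 (genHilbert μ α f)) :
    MemHp 1 (genHilbert μ α' f) ∧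
      hardyNorm 1 (genHilbert μ α' f) ≤ hardyNorm 1 (genHilbert μ α f) := by
  have hβ : 0 < α - α' := sub_pos.2 hlt
  rw [genHilbert_eq_ofScalarsSum_unitMoment_mul μ hα' hlt]
  rw [genHilbert_eq_ofScalarsSum] at hf ⊢
  exact memHp_one_ofScalarsSum_unitMoment_mul (fun t ht ↦ betaPDFReal_pos ht.1 ht.2 hα' hβ)
    (integrable_betaPDFReal hα' hβ).integrableOn (setIntegral_Ioo_betaPDFReal hα' hβ).le hf

end GenHilbert

theorem genHilbert_bounded_of_lt_general (p α : ℝ) (μ : Measure ℝ) (hbd : BoundedOp μ α p 1) :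
    ∀ α' : ℝ, 0 < α' → α' < α → BoundedOp μ α' p 1 := by
  intro α' hα' hlt
  obtain ⟨C, hC, hbd⟩ := hbd
  refine ⟨C, hC, fun f hf ↦ ?_⟩
  obtain ⟨hmem, hle⟩ := hbd f hf
  obtain ⟨hmem', hle'⟩ := memHp_one_genHilbert_of_lt μ hα' hlt hmem
  exact ⟨hmem', hle'.trans hle⟩

/-- For `0 < p ≤ 1` and `μ` a finite positive Borel measure on
`[0,1)` which is a `1/p`-Carleson measure, if `H_{μ,α} : H^p → H^1` is bounded
for some `α > 0`, then `H_{μ,α'} : H^p → H^1` is bounded for every `0 < α' < α`. -/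
theorem genHilbert_bounded_of_lt (p α : ℝ) (hp0 : 0 < p) (hp1 : p ≤ 1)
    (hα : 0 < α) (μ : Measure ℝ) [IsFiniteMeasure μ]
    (hsupp : μ (Set.Ico (0:ℝ) 1)ᶜ = 0) (hcar : IsCarleson μ (1 / p))
    (hbd : BoundedOp μ α p 1) :
    ∀ α' : ℝ, 0 < α' → α' < α → BoundedOp μ α' p 1 :=
  genHilbert_bounded_of_lt_general p α μ hbd
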